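/- arXiv:1711.03061 — 3 statements merged into one kernel-verified Lean document; each statement's English description precedes it below -/
import Mathlib

section
/- Let C be a category admitting finite coproducts, reflexive coequalizers, and filtered colimits. Then C admits all small colimits. Moreover, a functor F : C → D between two such categories that preserves finite coproducts, reflexive coequalizers, and filtered colimits preserves all small colimits. -/
open CategoryTheory CategoryTheory.Limits

universe v u u'

/-!
A coequalizer of `f g : X ⟶ Y` is the same as a coequalizer of the reflexive pair
`[f, 𝟙], [g, 𝟙] : X ⨿ Y ⟶ Y`: by the universal property of `X ⨿ Y`, a map out of `Y`
coequalizes one pair iff it coequalizes the other. A coproduct `∐ f` is the filtered colimit of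
the finite subcoproducts `∐_S f`, so `F (∐ f)` is the filtered colimit of the `F (∐_S f)`, each of
which is a coproduct of the `F (f x)`, `x ∈ S`; hence `F (∐ f)` is a coproduct of all `F (f x)`.
Colimits are built from coequalizers and coproducts.
-/

namespace CategoryTheory.Limits

section Coequalizers

variable {E : Type*} [Category E]

def Cofork.isColimitOfCoequalizesIff {X X' Y Z : E} {f g : X ⟶ Y} {f' g' : X' ⟶ Y}
    (H : ∀ {W : E} (h : Y ⟶ W), f' ≫ h = g' ≫ h ↔ f ≫ h = g ≫ h)
    {π : Y ⟶ Z} {w' : f' ≫ π = g' ≫ π} (hc : IsColimit (Cofork.ofπ π w')) :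
    IsColimit (Cofork.ofπ π ((H π).1 w')) :=
  Cofork.IsColimit.mk _ (fun s => Cofork.IsColimit.desc hc s.π ((H s.π).2 s.condition))
    (fun _ => Cofork.IsColimit.π_desc' hc _ _)
    (fun _ _ hm => Cofork.IsColimit.hom_ext hc (hm.trans (Cofork.IsColimit.π_desc' hc _ _).symm))

theorem BinaryCofan.IsColimit.comp_eq_comp_iff {X Y P W : E} {i₁ : X ⟶ P} {i₂ : Y ⟶ P}
    (hc : IsColimit (BinaryCofan.mk i₁ i₂)) {f g : X ⟶ Y} {f' g' : P ⟶ Y}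
    (hf : i₁ ≫ f' = f) (hf' : i₂ ≫ f' = 𝟙 Y) (hg : i₁ ≫ g' = g) (hg' : i₂ ≫ g' = 𝟙 Y)
    (h : Y ⟶ W) : f' ≫ h = g' ≫ h ↔ f ≫ h = g ≫ h := by
  refine ⟨fun e => ?_, fun e => BinaryCofan.IsColimit.hom_ext hc ?_ ?_⟩
  · simpa [reassoc_of% hf, reassoc_of% hg] using i₁ ≫= e
  · change i₁ ≫ f' ≫ h = i₁ ≫ g' ≫ h
    rw [reassoc_of% hf, reassoc_of% hg, e]
  · change i₂ ≫ f' ≫ h = i₂ ≫ g' ≫ h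
    rw [reassoc_of% hf', reassoc_of% hg']

variable [HasBinaryCoproducts E] {X Y : E} (f g : X ⟶ Y)

instance : IsReflexivePair (coprod.desc f (𝟙 Y)) (coprod.desc g (𝟙 Y)) :=
  IsReflexivePair.mk' coprod.inr (coprod.inr_desc _ _) (coprod.inr_desc _ _)

theorem coprod_desc_comp_eq_comp_iff {W : E} (h : Y ⟶ W) :
    coprod.desc f (𝟙 Y) ≫ h = coprod.desc g (𝟙 Y) ≫ h ↔ f ≫ h = g ≫ h :=
  BinaryCofan.IsColimit.comp_eq_comp_iff (coprodIsCoprod X Y) (coprod.inl_desc _ _)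
    (coprod.inr_desc _ _) (coprod.inl_desc _ _) (coprod.inr_desc _ _) h

variable [HasReflexiveCoequalizers E]

noncomputable def coequalizerCoprodDescIsCoequalizer :
    IsColimit (Cofork.ofπ (coequalizer.π (coprod.desc f (𝟙 Y)) (coprod.desc g (𝟙 Y)))
      ((coprod_desc_comp_eq_comp_iff f g _).1 (coequalizer.condition _ _))) :=
  Cofork.isColimitOfCoequalizesIff (coprod_desc_comp_eq_comp_iff f g)
    (coequalizerIsCoequalizer _ _)

theorem hasCoequalizers_of_hasReflexiveCoequalizers : HasCoequalizers E :=
  have {X Y : E} {f g : X ⟶ Y} : HasColimit (parallelPair f g) :=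
    ⟨⟨⟨_, coequalizerCoprodDescIsCoequalizer f g⟩⟩⟩
  hasCoequalizers_of_hasColimit_parallelPair E

end Coequalizers

section Preservation

variable {C : Type*} [Category C] {D : Type*} [Category D] (F : C ⥤ D)

theorem preservesCoequalizers_of_preservesReflexiveCoequalizers [HasBinaryCoproducts C]
    [HasReflexiveCoequalizers C] [PreservesColimitsOfShape (Discrete WalkingPair) F]
    (hF : ∀ {X Y : C} (f g : X ⟶ Y) [IsReflexivePair f g], PreservesColimit (parallelPair f g) F) :
    PreservesColimitsOfShape WalkingParallelPair F := by
  have {X Y : C} (f g : X ⟶ Y) : PreservesColimit (parallelPair f g) F := by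
    have := hF (coprod.desc f (𝟙 Y)) (coprod.desc g (𝟙 Y))
    refine preservesColimit_of_preserves_colimit_cocone (coequalizerCoprodDescIsCoequalizer f g)
      ((isColimitMapCoconeCoforkEquiv F _).symm ?_)
    refine Cofork.isColimitOfCoequalizesIff (fun h => BinaryCofan.IsColimit.comp_eq_comp_iff
      (isColimitOfHasBinaryCoproductOfPreservesColimit F X Y) ?_ ?_ ?_ ?_ h)
      (isColimitCoforkMapOfIsColimit F _ (coequalizerIsCoequalizer _ _)) <;>
    simp only [← F.map_comp, coprod.inl_desc, coprod.inr_desc, F.map_id]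
  exact ⟨fun {K} => preservesColimit_of_iso_diagram F (diagramIsoParallelPair K).symm⟩

open CoproductsFromFiniteFiltered in
theorem preservesColimitsOfShape_discrete_of_preservesFiniteCoproducts [HasFiniteCoproducts C]
    [PreservesFiniteCoproducts F] {α : Type*} [HasColimitsOfShape (Discrete α) C]
    [HasColimitsOfShape (Finset (Discrete α)) C]
    [PreservesColimitsOfShape (Finset (Discrete α)) F] :
    PreservesColimitsOfShape (Discrete α) F := by
  suffices ∀ f : α → C, PreservesColimit (Discrete.functor f) F from
    preservesColimitsOfShape_of_discrete F
  intro f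
  have hfilt := isColimitOfPreserves F (isColimitFiniteSubproductsCocone f)
  -- The point is written as `(liftToFinsetObj _).obj S` to match the diagram of `hfilt`.
  have hfin (S : Finset (Discrete α)) :
      IsColimit (Cofan.mk (F.obj ((liftToFinsetObj (Discrete.functor f)).obj S))
        fun x => F.map (Sigma.ι (fun x : S => f x.1.as) x) : Cofan fun x : S => F.obj (f x.1.as)) :=
    isColimitOfHasCoproductOfPreservesColimit F _
  refine preservesColimit_of_preserves_colimit_cocone (coproductIsCoproduct f)
    ((isColimitMapCoconeCofanMkEquiv F f _).symm ?_)
  have hfin_fac (S : Finset (Discrete α)) {W : D} (g : ∀ x : S, F.obj (f x.1.as) ⟶ W) (x : S) :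
      F.map (Sigma.ι _ x) ≫ Cofan.IsColimit.desc (hfin S) g = g x :=
    Cofan.IsColimit.fac (hfin S) g x
  refine Cofan.IsColimit.mk _ (fun s => hfilt.desc
    ⟨s.pt, { app S := Cofan.IsColimit.desc (hfin S) fun x => s.inj x.1.as, naturality := ?_ }⟩) ?_ ?_
  · intro S T hST
    refine Cofan.IsColimit.hom_ext (hfin S) _ _ fun x => ?_
    dsimp only [Cofan.inj, Cofan.mk, Functor.comp_map, liftToFinsetObj_map, Functor.const_obj_map]
    erw [← F.map_comp_assoc, Sigma.ι_desc, Category.comp_id, hfin_fac, hfin_fac]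
  · intro s j
    have hj : Sigma.ι f j = Sigma.ι (fun x : ({⟨j⟩} : Finset (Discrete α)) => f x.1.as)
        ⟨⟨j⟩, Finset.mem_singleton_self _⟩ ≫ (finiteSubcoproductsCocone f).ι.app {⟨j⟩} :=
      (Sigma.ι_desc (fun x : ({⟨j⟩} : Finset (Discrete α)) => Sigma.ι f x.1.as)
        ⟨⟨j⟩, Finset.mem_singleton_self _⟩).symm
    change F.map (Sigma.ι f j) ≫ _ = _
    erw [hj, F.map_comp, Category.assoc, hfilt.fac]
    exact hfin_fac _ _ _
  · intro s m hm
    refine hfilt.hom_ext fun S => Cofan.IsColimit.hom_ext (hfin S) _ _ fun x => ?_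
    dsimp only [Cofan.inj, Cofan.mk, Functor.mapCocone, finiteSubcoproductsCocone_ι_app]
    erw [hfilt.fac, ← F.map_comp_assoc, Sigma.ι_desc, hfin_fac]
    exact hm _

end Preservation

end CategoryTheory.Limits

theorem stmt_1_general {C : Type u} [Category.{v} C] {D : Type u'} [Category.{v} D]
    [HasFiniteCoproducts C] [HasReflexiveCoequalizers C]
    (hfilC : ∀ (J : Type v) [SmallCategory J] [IsFiltered J], HasColimitsOfShape J C)
    (F : C ⥤ D)
    (h1 : PreservesFiniteCoproducts F)
    (h2 : ∀ {X Y : C} (f g : X ⟶ Y), IsReflexivePair f g →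
      Nonempty (PreservesColimit (parallelPair f g) F))
    (h3 : ∀ (J : Type v) [SmallCategory J] [IsFiltered J],
      Nonempty (PreservesColimitsOfShape J F)) :
    HasColimits C ∧ Nonempty (PreservesColimits F) := by
  have : HasFilteredColimitsOfSize.{v, v} C := ⟨fun J _ _ => hfilC J⟩
  have : HasCoequalizers C := hasCoequalizers_of_hasReflexiveCoequalizers
  have : HasCoproducts.{v} C := hasCoproducts_of_finite_and_filtered
  have : PreservesColimitsOfShape WalkingParallelPair F :=
    preservesCoequalizers_of_preservesReflexiveCoequalizers F fun f g _ => (h2 f g ‹_›).some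
  have (α : Type v) : PreservesColimitsOfShape (Discrete α) F :=
    have := (h3 (Finset (Discrete α))).some
    preservesColimitsOfShape_discrete_of_preservesFiniteCoproducts F
  exact ⟨has_colimits_of_hasCoequalizers_and_coproducts,
    ⟨preservesColimits_of_preservesCoequalizers_and_coproducts F⟩⟩

theorem stmt_1 {C : Type u} [Category.{v} C] {D : Type u'} [Category.{v} D]
    [HasFiniteCoproducts C] [HasReflexiveCoequalizers C]
    [HasFiniteCoproducts D] [HasReflexiveCoequalizers D]
    (hfilC : ∀ (J : Type v) [SmallCategory J] [IsFiltered J], HasColimitsOfShape J C)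
    (hfilD : ∀ (J : Type v) [SmallCategory J] [IsFiltered J], HasColimitsOfShape J D)
    (F : C ⥤ D)
    (h1 : PreservesFiniteCoproducts F)
    (h2 : ∀ {X Y : C} (f g : X ⟶ Y), IsReflexivePair f g →
      Nonempty (PreservesColimit (parallelPair f g) F))
    (h3 : ∀ (J : Type v) [SmallCategory J] [IsFiltered J],
      Nonempty (PreservesColimitsOfShape J F)) :
    HasColimits C ∧ Nonempty (PreservesColimits F) :=
  stmt_1_general hfilC F h1 h2 h3
end

section
/- Let C be a symmetric monoidal category and let L be an invertible object of C (i.e., there exists an object L' and an isomorphism L ⊗ L' ≅ 1). Then the cyclic permutation automorphism of L ⊗ L ⊗ L induced by the symmetry — namely the composite (β_{L,L} ⊗ id_L) ∘ (id_L ⊗ β_{L,L}) : L ⊗ (L ⊗ L) → (L ⊗ L) ⊗ L, transported along associators so as to be an endomorphism of L ⊗ L ⊗ L — is equal to the identity morphism. -/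
open CategoryTheory MonoidalCategory

universe v u

theorem stmt_3 {C : Type u} [Category.{v} C] [MonoidalCategory C] [SymmetricCategory C]
    (L : C) (hL : ∃ L' : C, Nonempty (L ⊗ L' ≅ 𝟙_ C)) :
    (L ◁ (β_ L L).hom) ≫ (α_ L L L).inv ≫ ((β_ L L).hom ▷ L) ≫ (α_ L L L).hom =
      𝟙 (L ⊗ L ⊗ L) := by
  obtain ⟨L', ⟨e⟩⟩ := hL
  -- L' ⊗ L ≅ 𝟙 as well, via the braiding
  have e' : L' ⊗ L ≅ 𝟙_ C := β_ L' L ≪≫ e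
  -- tensoring on the right with L is an equivalence, hence full
  let E : C ≌ C := CategoryTheory.Equivalence.mk (tensorRight L) (tensorRight L')
    (NatIso.ofComponents
      (fun X => (ρ_ X).symm ≪≫ whiskerLeftIso X e.symm ≪≫ (α_ X L L').symm)
      (by
        intro X Y f
        simp only [Functor.id_obj, Functor.comp_obj, Iso.trans_hom, Iso.symm_hom,
          whiskerLeftIso_hom, Category.assoc, Functor.id_map, Functor.comp_map]
        rw [rightUnitor_inv_naturality_assoc, ← whisker_exchange_assoc,
          associator_inv_naturality_left]
        rfl) )
    (NatIso.ofComponents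
      (fun X => α_ X L' L ≪≫ whiskerLeftIso X e' ≪≫ ρ_ X)
      (by
        intro X Y f
        simp only [Functor.id_obj, Functor.comp_obj, Iso.trans_hom,
          whiskerLeftIso_hom, Category.assoc, Functor.id_map, Functor.comp_map]
        rw [← rightUnitor_naturality]
        show (f ▷ L' ▷ L) ≫ _ = _
        rw [associator_naturality_left_assoc, whisker_exchange_assoc]) )
  haveI : (tensorRight L).Full := E.isEquivalence_functor.full
  -- write the braiding as g ▷ L
  obtain ⟨g, hg⟩ := (tensorRight L).map_surjective (X := L) (Y := L) (β_ L L).hom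
  have hg' : g ▷ L = (β_ L L).hom := hg
  -- the braiding also equals L ◁ g
  have hg'' : L ◁ g = (β_ L L).hom := by
    have h1 : (g ▷ L) ≫ (β_ L L).hom = (β_ L L).hom ≫ (L ◁ g) :=
      BraidedCategory.braiding_naturality_left g L
    rw [hg', SymmetricCategory.symmetry] at h1
    calc L ◁ g = (β_ L L).hom ≫ (β_ L L).hom ≫ (L ◁ g) := by
                  rw [SymmetricCategory.symmetry_assoc]
      _ = (β_ L L).hom := by rw [← h1, Category.comp_id]
  -- transport (β ▷ L) across the associator
  have key : (α_ L L L).inv ≫ ((β_ L L).hom ▷ L) ≫ (α_ L L L).hom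
      = L ◁ (g ▷ L) := by
    rw [← hg'']
    rw [Iso.inv_comp_eq]
    exact MonoidalCategory.associator_naturality_middle L g L
  rw [key, ← hg'', ← MonoidalCategory.whiskerLeft_comp, hg'', hg',
    SymmetricCategory.symmetry, MonoidalCategory.whiskerLeft_id]
end

section
/- Let R be a commutative ring, A a commutative R-algebra that is finitely generated projective as an R-module, and λ : A → R an R-linear map such that the map A → Hom_R(A, R), a ↦ (b ↦ λ(ab)), is an isomorphism of R-modules (i.e., λ exhibits A as a Frobenius algebra over R). Equip Hom_R(A, M) with the A-module structure (a · φ)(x) = φ(xa). Then for every R-module M, the map θ_M : A ⊗_R M → Hom_R(A, M) given by θ_M(a ⊗ m)(x) = λ(ax) · m is an isomorphism of A-modules, natural in M. -/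
open scoped TensorProduct

universe u

open LinearMap TensorProduct Module

/-- For a finitely generated projective module `A`, the natural map
`Dual R A ⊗ M → Hom(A, M)` is bijective. -/
theorem dualTensorHom_bijective_of_projective {R A M : Type u} [CommRing R]
    [CommRing A] [Algebra R A] [Module.Finite R A] [Module.Projective R A]
    [AddCommGroup M] [Module R M] :
    Function.Bijective (dualTensorHom R A M) := by
  obtain ⟨n, f, g, hfsurj, hginj, hfg⟩ :=
    Module.Finite.exists_comp_eq_id_of_projective R A
  -- dual basis: aᵢ = f (single i 1), fᵢ = proj i ∘ g
  set a : Fin n → A := fun i => f (Pi.single i 1) with ha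
  set φ : Fin n → (A →ₗ[R] R) := fun i => (LinearMap.proj i) ∘ₗ g with hφ
  have key : ∀ x : A, ∑ i, φ i x • a i = x := by
    intro x
    have : ∑ i, φ i x • a i = f (∑ i, (g x i) • (Pi.single i 1 : Fin n → R)) := by
      rw [map_sum]
      simp [ha, hφ]
    rw [this]
    have h2 : (∑ i, (g x i) • (Pi.single i 1 : Fin n → R)) = g x := by
      funext j
      simp [Pi.single_apply, Finset.sum_apply]
    rw [h2]
    exact congrFun (congrArg (fun h => h.toFun) hfg) x
  -- inverse map
  set β : (A →ₗ[R] M) →ₗ[R] Module.Dual R A ⊗[R] M :=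
    ∑ i, (TensorProduct.mk R (Module.Dual R A) M (φ i)) ∘ₗ
      (LinearMap.applyₗ (a i)) with hβ
  have hβ_apply : ∀ (ψ : A →ₗ[R] M), β ψ = ∑ i, φ i ⊗ₜ[R] ψ (a i) := by
    intro ψ
    simp [hβ]
  constructor
  · -- injective: β ∘ dualTensorHom = id
    have : ∀ t : Module.Dual R A ⊗[R] M, β (dualTensorHom R A M t) = t := by
      intro t
      induction t with
      | zero => simp
      | add s t hs ht => simp [map_add, hs, ht]
      | tmul ψ m =>
          rw [hβ_apply]
          have : ∀ i : Fin n, (φ i : A →ₗ[R] R) ⊗ₜ[R]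
              ((dualTensorHom R A M (ψ ⊗ₜ[R] m)) (a i)) =
              (ψ (a i) • φ i) ⊗ₜ[R] m := by
            intro i
            rw [dualTensorHom_apply, TensorProduct.tmul_smul,
              TensorProduct.smul_tmul']
          rw [Finset.sum_congr rfl fun i _ => this i, ← TensorProduct.sum_tmul]
          congr 1
          ext x
          simp only [LinearMap.coe_sum, Finset.sum_apply, LinearMap.smul_apply,
            smul_eq_mul]
          calc ∑ i, ψ (a i) * φ i x = ψ (∑ i, φ i x • a i) := by
                rw [map_sum]; congr 1; ext i; rw [map_smul, smul_eq_mul, mul_comm]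
            _ = ψ x := by rw [key]
    intro s t hst
    rw [← this s, ← this t, hst]
  · -- surjective
    intro ψ
    refine ⟨β ψ, ?_⟩
    ext x
    rw [hβ_apply, map_sum]
    simp only [LinearMap.coe_sum, Finset.sum_apply, dualTensorHom_apply]
    calc ∑ i, φ i x • ψ (a i) = ψ (∑ i, φ i x • a i) := by
          rw [map_sum]; congr 1; ext i; rw [map_smul]
      _ = ψ x := by rw [key]

theorem stmt_10 {R A : Type u} [CommRing R] [CommRing A] [Algebra R A]
    [Module.Finite R A] [Module.Projective R A]
    (lam : A →ₗ[R] R)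
    (hlam : Function.Bijective fun a : A => lam ∘ₗ LinearMap.mulLeft R a)
    (M N : Type u) [AddCommGroup M] [Module R M] [AddCommGroup N] [Module R N]
    (θM : A ⊗[R] M →ₗ[R] (A →ₗ[R] M))
    (hθM : ∀ (a : A) (m : M) (x : A), θM (a ⊗ₜ m) x = lam (a * x) • m)
    (θN : A ⊗[R] N →ₗ[R] (A →ₗ[R] N))
    (hθN : ∀ (a : A) (m : N) (x : A), θN (a ⊗ₜ m) x = lam (a * x) • m) :
    Function.Bijective θM ∧
    (∀ (a : A) (t : A ⊗[R] M) (x : A), θM (a • t) x = θM t (x * a)) ∧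
    (∀ (ψ : M →ₗ[R] N) (t : A ⊗[R] M), θN (LinearMap.lTensor A ψ t) = ψ ∘ₗ θM t) := by
  -- the Frobenius map as a linear map
  set Φ : A →ₗ[R] Module.Dual R A :=
    { toFun := fun a => lam ∘ₗ LinearMap.mulLeft R a
      map_add' := by
        intro a b; ext x
        simp [LinearMap.mulLeft_apply, add_mul]
      map_smul' := by
        intro r a; ext x
        simp [LinearMap.mulLeft_apply, smul_mul_assoc] } with hΦdef
  have hΦ : Function.Bijective Φ := hlam
  have hθM_eq : θM = (dualTensorHom R A M) ∘ₗ (Φ.rTensor M) := by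
    apply TensorProduct.ext'
    intro a m
    ext x
    simp [hθM, hΦdef]
  refine ⟨?_, ?_, ?_⟩
  · rw [hθM_eq]
    have hr : Function.Bijective (Φ.rTensor M) := by
      have : Φ.rTensor M =
          (LinearEquiv.rTensor M (LinearEquiv.ofBijective Φ hΦ)).toLinearMap := by
        apply TensorProduct.ext'
        intro a m
        simp [LinearEquiv.rTensor, TensorProduct.congr]
      rw [this]
      exact (LinearEquiv.rTensor M (LinearEquiv.ofBijective Φ hΦ)).bijective
    have := Function.Bijective.comp
      (dualTensorHom_bijective_of_projective (R := R) (A := A) (M := M)) hr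
    rwa [LinearMap.coe_comp]
  · intro a t x
    induction t with
    | zero => simp
    | add s t hs ht => rw [smul_add, map_add, map_add]; simp [hs, ht]
    | tmul b m =>
        rw [TensorProduct.smul_tmul', smul_eq_mul, hθM, hθM]
        ring_nf
  · intro ψ t
    induction t with
    | zero => simp
    | add s t hs ht => rw [map_add, map_add, hs, ht]; ext x; simp
    | tmul b m =>
        rw [LinearMap.lTensor_tmul]
        ext x
        rw [LinearMap.comp_apply, hθM, hθN, map_smul]
end
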